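/- Let L be a complete lattice, B a type, β : B → L a basis, and φ ⊆ B × L a generator. Then there is an equivalence (bijection) between the type of subsets P ⊆ B that are both c-closed and φ-closed and the type of deflationary points {a : L | Γ_φ(a) ≤ a}, given by P ↦ sSup (β '' P) with inverse a ↦ {b : B | β b ≤ a}. -/

import Mathlib

/-- `P` is closed under containment. -/
def IsCClosed {L B : Type*} [CompleteLattice L] (β : B → L) (P : Set B) : Prop :=
  ∀ U : Set B, U ⊆ P → ∀ b : B, β b ≤ sSup (β '' U) → b ∈ P

/-- `P` is closed under the generator `φ`. -/
def IsPhiClosed {L B : Type*} [CompleteLattice L] (β : B → L) (φ : Set (B × L))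
    (P : Set B) : Prop :=
  ∀ b : B, ∀ a : L, (b, a) ∈ φ → {b' : B | β b' ≤ a} ⊆ P → b ∈ P

/-!
For a basis `β`, the map `a ↦ {b | β b ≤ a}` is injective with left inverse `P ↦ sSup (β '' P)`,
and its image consists exactly of the c-closed sets. Along it, φ-closedness of `{b | β b ≤ a}`
is exactly the condition `Γ_φ a ≤ a`.
-/

section BasisClosure

variable {L B : Type*} [CompleteLattice L] {β : B → L}

/-- The operator `Γ_φ`. -/
def gammaPhi (β : B → L) (φ : Set (B × L)) (a : L) : L :=
  sSup (β '' {b : B | ∃ a' : L, (b, a') ∈ φ ∧ a' ≤ a})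

theorem le_gammaPhi {φ : Set (B × L)} {b : B} {a a' : L} (hba' : (b, a') ∈ φ) (ha' : a' ≤ a) :
    β b ≤ gammaPhi β φ a :=
  le_sSup (Set.mem_image_of_mem β ⟨a', hba', ha'⟩)

theorem le_of_setOf_le_subset (hβ : ∀ x : L, x = sSup (β '' {b : B | β b ≤ x})) {a a' : L}
    (h : {b : B | β b ≤ a'} ⊆ {b : B | β b ≤ a}) : a' ≤ a := by
  rw [hβ a']
  exact sSup_le (Set.forall_mem_image.2 h)

theorem isCClosed_setOf_le (a : L) : IsCClosed β {b : B | β b ≤ a} :=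
  fun _ hU _ hb => hb.trans (sSup_le (Set.forall_mem_image.2 hU))

theorem IsCClosed.setOf_le_sSup_image_eq {P : Set B} (hP : IsCClosed β P) :
    {b : B | β b ≤ sSup (β '' P)} = P :=
  Set.Subset.antisymm (fun b hb => hP P le_rfl b hb)
    (fun _ hb => le_sSup (Set.mem_image_of_mem β hb))

theorem gammaPhi_le_of_isPhiClosed_setOf_le {φ : Set (B × L)} {a : L}
    (hφ : IsPhiClosed β φ {b : B | β b ≤ a}) : gammaPhi β φ a ≤ a := by
  refine sSup_le ?_
  rintro _ ⟨b, ⟨a', hba', ha'⟩, rfl⟩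
  exact hφ b a' hba' fun _ hb' => hb'.trans ha'

theorem isPhiClosed_setOf_le_of_gammaPhi_le
    (hβ : ∀ x : L, x = sSup (β '' {b : B | β b ≤ x})) {φ : Set (B × L)} {a : L}
    (hΓ : gammaPhi β φ a ≤ a) : IsPhiClosed β φ {b : B | β b ≤ a} := by
  intro b a' hba' hsub
  exact (le_gammaPhi hba' (le_of_setOf_le_subset hβ hsub)).trans hΓ

end BasisClosure

/-- The c-φ-closed subsets of `B` correspond to the deflationary points of
`Γ_φ`, via `P ↦ sSup (β '' P)` with inverse `a ↦ {b | β b ≤ a}`. -/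
theorem closed_subsets_equiv_deflationary {L B : Type*} [CompleteLattice L] (β : B → L)
    (hβ : ∀ x : L, x = sSup (β '' {b : B | β b ≤ x}))
    (φ : Set (B × L)) :
    ∃ e : {P : Set B // IsCClosed β P ∧ IsPhiClosed β φ P} ≃
        {a : L // sSup (β '' {b : B | ∃ a' : L, (b, a') ∈ φ ∧ a' ≤ a}) ≤ a},
      (∀ P, (e P).1 = sSup (β '' P.1)) ∧
      (∀ a, (e.symm a).1 = {b : B | β b ≤ a.1}) := by
  let e : {P : Set B // IsCClosed β P ∧ IsPhiClosed β φ P} ≃ {a : L // gammaPhi β φ a ≤ a} :=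
    { toFun := fun P => ⟨sSup (β '' P.1), gammaPhi_le_of_isPhiClosed_setOf_le <| by
          rw [P.2.1.setOf_le_sSup_image_eq]; exact P.2.2⟩
      invFun := fun a => ⟨{b : B | β b ≤ a.1}, isCClosed_setOf_le a.1,
          isPhiClosed_setOf_le_of_gammaPhi_le hβ a.2⟩
      left_inv := fun P => Subtype.ext P.2.1.setOf_le_sSup_image_eq
      right_inv := fun a => Subtype.ext (hβ a.1).symm }
  exact ⟨e, fun _ => rfl, fun _ => rfl⟩
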